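/- arXiv:2206.08205 — 5 statements merged into one kernel-verified Lean document; each statement's English description precedes it below -/
import Mathlib

section
/- Under the standing assumptions (φ concave vanishing at 0 with positive right derivative at 0, ψ as in Assumption 1.1, A full row rank, σ not an integer multiple of sup φ), the Mangasarian-Fromovitz constraint qualification holds for the constraint ∑_{i=1}^m φ((b_i - a_iᵀx)²) ≤ σ: whenever x satisfies the constraint with equality, the gradient vector ∑_{i=1}^m φ'₊((b_i - a_iᵀx)²)(b_i - a_iᵀx) a_i is nonzero. -/
/-!
If the gradient vanished, linear independence of the rows would force `φ'(rᵢ²) rᵢ = 0` for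
every residual `rᵢ = bᵢ - aᵢᵀx`. A concave function is maximal at each of its stationary points,
so every nonzero residual has `φ(rᵢ²) = sup φ`, while zero residuals contribute `φ 0 = 0`.
Hence `σ = k · sup φ` with `1 ≤ k ≤ m`, which is excluded.
-/

open Finset

theorem ConcaveOn.isMaxOn_of_hasDerivAt_zero {S : Set ℝ} {f : ℝ → ℝ} {x : ℝ}
    (hfc : ConcaveOn ℝ S f) (hx : x ∈ S) (hf : HasDerivAt f 0 x) : IsMaxOn f S x := by
  refine isMaxOn_iff.2 fun y hy => ?_
  rcases lt_trichotomy y x with hyx | rfl | hxy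
  · have hslope := hfc.le_slope_of_hasDerivAt hy hx hyx hf
    rw [slope_def_field, le_div_iff₀ (sub_pos.2 hyx)] at hslope
    linarith
  · exact le_rfl
  · have hslope := hfc.slope_le_of_hasDerivAt hx hy hxy hf
    rw [slope_def_field, div_le_iff₀ (sub_pos.2 hxy)] at hslope
    linarith

theorem Fintype.exists_sum_eq_nsmul_of_forall_eq_zero_or_eq {ι M : Type*} [Fintype ι]
    [AddCommMonoid M] {f : ι → M} {c : M} (h : ∀ i, f i = 0 ∨ f i = c) :
    ∃ k ≤ Fintype.card ι, ∑ i, f i = k • c := by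
  classical
  refine ⟨#{i | f i = c}, card_le_univ _, ?_⟩
  calc ∑ i, f i = ∑ i, if f i = c then c else 0 :=
        Finset.sum_congr rfl fun i _ => by rcases h i with hi | hi <;> split_ifs <;> simp_all
    _ = #{i | f i = c} • c := by rw [sum_ite, sum_const_zero, add_zero, sum_const]

theorem mfcq_holds_general
    (m n : ℕ) (φ D : ℝ → ℝ)
    (a : Fin m → Fin n → ℝ) (b : Fin m → ℝ) (σ : ℝ)
    (hconc : ConcaveOn ℝ (Set.Ici 0) φ)
    (h0 : φ 0 = 0)
    (hderiv : ∀ t ∈ Set.Ioi (0:ℝ), HasDerivAt φ (D t) t)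
    (hrank : LinearIndependent ℝ a)
    (hσpos : 0 < σ)
    (hnotmul : ∀ k : ℕ, 1 ≤ k → k ≤ m →
      (σ : EReal) ≠ ((k : ℝ) : EReal) * (⨆ t : Set.Ici (0:ℝ), ((φ t : ℝ) : EReal))) :
    ∀ x : Fin n → ℝ,
      (∑ i, φ ((b i - ∑ j, a i j * x j) ^ 2) = σ) →
      (fun j => ∑ i, D ((b i - ∑ j', a i j' * x j') ^ 2)
          * (b i - ∑ j', a i j' * x j') * a i j) ≠ (0 : Fin n → ℝ) := by
  intro x hx hgrad
  set r : Fin m → ℝ := fun i => b i - ∑ j, a i j * x j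
  have hsum : ∑ i, φ (r i ^ 2) = σ := hx
  have hstat : ∀ i, D (r i ^ 2) * r i = 0 :=
    Fintype.linearIndependent_iff.1 hrank _ (by
      ext j; simpa [Finset.sum_apply, mul_assoc] using congrFun hgrad j)
  -- a nonzero residual is a stationary, hence maximal, point of the concave `φ`
  have hmax : ∀ i, r i ≠ 0 → IsMaxOn φ (Set.Ici 0) (r i ^ 2) := fun i hi =>
    hconc.isMaxOn_of_hasDerivAt_zero (Set.mem_Ici.2 (sq_nonneg _)) <|
      (mul_eq_zero.1 (hstat i)).resolve_right hi ▸ hderiv _ (Set.mem_Ioi.2 (by positivity))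
  obtain ⟨i₀, -, hi₀⟩ := exists_ne_zero_of_sum_ne_zero (hsum ▸ hσpos.ne')
  have hr₀ : r i₀ ≠ 0 := fun h => hi₀ (by simp [h, h0])
  have hterms : ∀ i, φ (r i ^ 2) = 0 ∨ φ (r i ^ 2) = φ (r i₀ ^ 2) := fun i => by
    by_cases hi : r i = 0
    · simp [hi, h0]
    · exact .inr <| le_antisymm (isMaxOn_iff.1 (hmax i₀ hr₀) _ (Set.mem_Ici.2 (sq_nonneg _)))
        (isMaxOn_iff.1 (hmax i hi) _ (Set.mem_Ici.2 (sq_nonneg _)))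
  obtain ⟨k, hkm, hσ⟩ := Fintype.exists_sum_eq_nsmul_of_forall_eq_zero_or_eq hterms
  rw [hsum, nsmul_eq_mul] at hσ
  rw [Fintype.card_fin] at hkm
  have hk : 1 ≤ k := Nat.one_le_iff_ne_zero.2 fun hk => by simp [hk] at hσ; linarith
  have hsup : (⨆ t : Set.Ici (0:ℝ), ((φ t : ℝ) : EReal)) = φ (r i₀ ^ 2) :=
    ((hmax i₀ hr₀).comp_mono fun _ _ => EReal.coe_le_coe).iSup_eq (Set.mem_Ici.2 (sq_nonneg _))
  exact hnotmul k hk hkm (by rw [hsup, hσ]; rfl)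

/-- Proposition 2.1(ii): under the standing assumptions, the MFCQ holds:
whenever `x` satisfies the constraint `∑ φ((b i - aᵢᵀx)²) ≤ σ` with equality, the gradient
vector `∑ i, φ'₊((b i - aᵢᵀx)²) (b i - aᵢᵀx) • a i` is nonzero.
Here `D` is the right derivative of `φ`, with `D t = φ'(t)` for `t > 0` and
`D 0 = lim_{t↓0} φ'(t) ∈ (0,∞)`. -/
theorem mfcq_holds
    (m n : ℕ) (φ D : ℝ → ℝ)
    (a : Fin m → Fin n → ℝ) (b : Fin m → ℝ) (σ : ℝ)
    (hcont : ContinuousOn φ (Set.Ici 0))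
    (hconc : ConcaveOn ℝ (Set.Ici 0) φ)
    (h0 : φ 0 = 0)
    (hnonneg : ∀ t ∈ Set.Ici (0:ℝ), 0 ≤ φ t)
    (hderiv : ∀ t ∈ Set.Ioi (0:ℝ), HasDerivAt φ (D t) t)
    (hDnonneg : ∀ t ∈ Set.Ici (0:ℝ), 0 ≤ D t)
    (hD0 : 0 < D 0)
    (hlim : Filter.Tendsto D (nhdsWithin 0 (Set.Ioi 0)) (nhds (D 0)))
    (hrank : LinearIndependent ℝ a)
    (hσpos : 0 < σ) (hσlt : σ < ∑ i, φ (b i ^ 2))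
    (hnotmul : ∀ k : ℕ, 1 ≤ k → k ≤ m →
      (σ : EReal) ≠ ((k : ℝ) : EReal) * (⨆ t : Set.Ici (0:ℝ), ((φ t : ℝ) : EReal))) :
    ∀ x : Fin n → ℝ,
      (∑ i, φ ((b i - ∑ j, a i j * x j) ^ 2) = σ) →
      (fun j => ∑ i, D ((b i - ∑ j', a i j' * x j') ^ 2)
          * (b i - ∑ j', a i j' * x j') * a i j) ≠ (0 : Fin n → ℝ) :=
  mfcq_holds_general m n φ D a b σ hconc h0 hderiv hrank hσpos hnotmul
end

section
/- If x* is a local minimizer of minimizing ∑_{i=1}^n ψ(|x_i|) subject to ∑_{i=1}^m φ((b_i - a_iᵀx)²) ≤ σ, and the MFCQ holds at x*, then there exists λ ≥ 0 such that λ(∑φ((b_i-a_iᵀx*)²) - σ) = 0 and 0 ∈ Ψ'₊(|x*|) ∘ ∂‖x*‖₁ - 2λ ∑_{i=1}^m φ'₊((b_i-a_iᵀx*)²)(b_i-a_iᵀx*) a_i. -/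
/-!
Write `v = ∑ᵢ φ'₊(rᵢ²) rᵢ aᵢ` with `r = b - A x*`, so that `-2v` is the gradient of the
constraint. Concave functions lie below their tangent lines, so along `x* + t d` the objective
is at most `f(x*) + t·D(d)`, where `D(d) = ∑ⱼ ψ'₊(|x*ⱼ|) |·|'(x*ⱼ; dⱼ)` is the one-sided
directional derivative of the objective, and the constraint value drops below `σ` for small
`t > 0` as soon as `⟨v, d⟩ > 0`. Local minimality therefore forces `D(d) ≥ 0` on the open
half-space `⟨v, d⟩ > 0`. If the constraint were inactive, every direction would be admissible,
and shrinking a nonzero coordinate of `x*` would give `D(d) < 0`; so it is active, `v ≠ 0` by the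
MFCQ, and by continuity `D ≥ 0` on the closed half-space. As `D` is separable, testing it on
directions supported on two coordinates produces `μ ≥ 0` with
`μ v ∈ Ψ'₊(|x*|) ∘ ∂‖x*‖₁`, and `λ = μ / 2`.
-/

open Filter Set Topology Matrix

lemma ConcaveOn.le_tangent_of_hasDerivWithinAt_Ioi {S : Set ℝ} {f : ℝ → ℝ} {f' x y : ℝ}
    (hf : ConcaveOn ℝ S f) (hx : x ∈ S) (hy : y ∈ S) (hS : S ∈ 𝓝[>] x)
    (hf' : HasDerivWithinAt f f' (Ioi x) x) :
    f y ≤ f x + f' * (y - x) := by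
  rcases lt_trichotomy y x with hyx | rfl | hxy
  · have hslope : f' ≤ slope f y x := by
      refine le_of_tendsto ((hasDerivWithinAt_iff_tendsto_slope' self_notMem_Ioi).mp hf') ?_
      filter_upwards [hS, self_mem_nhdsWithin] with t htS (hxt : x < t)
      rw [slope_def_field, slope_def_field]
      exact hf.slope_anti_adjacent hy htS hyx hxt
    rw [slope_def_field, le_div_iff₀ (sub_pos.2 hyx)] at hslope
    linarith
  · simp
  · have hslope := hf.slope_le_of_hasDerivWithinAt_Ioi hx hy hxy hf'
    rw [slope_def_field, div_le_iff₀ (sub_pos.2 hxy)] at hslope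
    linarith

lemma ConcaveOn.le_tangent_of_forall_hasDerivWithinAt_Ici {f f' : ℝ → ℝ}
    (hf : ConcaveOn ℝ (Ici 0) f) (hf' : ∀ t ∈ Ici (0 : ℝ), HasDerivWithinAt f (f' t) (Ici t) t)
    {x y : ℝ} (hx : 0 ≤ x) (hy : 0 ≤ y) : f y ≤ f x + f' x * (y - x) :=
  hf.le_tangent_of_hasDerivWithinAt_Ioi hx hy
    (mem_of_superset self_mem_nhdsWithin (Ioi_subset_Ici hx)) (hf' x hx).Ioi_of_Ici

lemma IsLocalMinOn.nonneg_of_eventually_le_add_mul {E : Type*} [AddCommGroup E] [Module ℝ E]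
    [TopologicalSpace E] [ContinuousAdd E] [ContinuousSMul ℝ E] {f : E → ℝ} {s : Set E}
    {x d : E} {D : ℝ} (hf : IsLocalMinOn f s x) (hs : ∀ᶠ t : ℝ in 𝓝[>] 0, x + t • d ∈ s)
    (hD : ∀ᶠ t : ℝ in 𝓝[>] 0, f (x + t • d) ≤ f x + t * D) : 0 ≤ D := by
  have hline : Tendsto (fun t : ℝ => x + t • d) (𝓝[>] 0) (𝓝[s] x) := by
    refine tendsto_nhdsWithin_iff.2 ⟨?_, hs⟩
    have : Continuous fun t : ℝ => x + t • d := by fun_prop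
    simpa using (this.tendsto 0).mono_left nhdsWithin_le_nhds
  obtain ⟨t, ht, hmin, hle⟩ :=
    ((eventually_mem_nhdsWithin (a := (0 : ℝ))).and ((hline.eventually hf).and hD)).exists
  exact nonneg_of_mul_nonneg_right (by linarith) (show (0 : ℝ) < t from ht)

lemma nonneg_of_nonneg_on_open_halfspace {E : Type*} [AddCommGroup E] [Module ℝ E]
    [TopologicalSpace E] [ContinuousAdd E] [ContinuousSMul ℝ E] {H : E → ℝ} (hH : Continuous H)
    (ℓ : E →ₗ[ℝ] ℝ) {v : E} (hv : 0 < ℓ v) (h : ∀ d, 0 < ℓ d → 0 ≤ H d) {d : E}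
    (hd : 0 ≤ ℓ d) : 0 ≤ H d := by
  have hpert : Tendsto (fun ε : ℝ => H (d + ε • v)) (𝓝[>] 0) (𝓝 (H d)) := by
    have : Continuous fun ε : ℝ => H (d + ε • v) := by fun_prop
    simpa using (this.tendsto 0).mono_left nhdsWithin_le_nhds
  refine ge_of_tendsto hpert ?_
  filter_upwards [self_mem_nhdsWithin] with ε (hε : 0 < ε)
  exact h _ (by rw [map_add, map_smul, smul_eq_mul]; positivity)

noncomputable def absDirDeriv (x δ : ℝ) : ℝ := if x = 0 then |δ| else SignType.sign x * δ

lemma absDirDeriv_zero_right (x : ℝ) : absDirDeriv x 0 = 0 := by simp [absDirDeriv]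

lemma absDirDeriv_of_eq_zero {x : ℝ} (hx : x = 0) (δ : ℝ) : absDirDeriv x δ = |δ| := if_pos hx

lemma absDirDeriv_of_ne_zero {x : ℝ} (hx : x ≠ 0) (δ : ℝ) :
    absDirDeriv x δ = SignType.sign x * δ := if_neg hx

lemma continuous_absDirDeriv (x : ℝ) : Continuous (absDirDeriv x) := by
  unfold absDirDeriv
  split_ifs <;> fun_prop

lemma abs_sign_of_ne_zero {x : ℝ} (hx : x ≠ 0) : |(SignType.sign x : ℝ)| = 1 := by
  rcases hx.lt_or_gt with h | h <;> simp [h]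

lemma eventually_abs_add_mul_eq (x δ : ℝ) :
    ∀ᶠ t in 𝓝[>] 0, |x + t * δ| = |x| + t * absDirDeriv x δ := by
  by_cases hx : x = 0
  · filter_upwards [self_mem_nhdsWithin] with t (ht : 0 < t)
    simp [hx, absDirDeriv, abs_mul, abs_of_pos ht]
  have hsmall : ∀ᶠ t in 𝓝[>] (0 : ℝ), t * |δ| < |x| := by
    refine Tendsto.eventually_lt_const (abs_pos.2 hx) ?_
    simpa using ((continuous_mul_const |δ|).tendsto 0).mono_left nhdsWithin_le_nhds
  filter_upwards [self_mem_nhdsWithin, hsmall] with t (ht : 0 < t) hsmall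
  have hpos : 0 < |x| + t * (SignType.sign x * δ) := by
    have h1 : -|δ| ≤ SignType.sign x * δ := by
      have := neg_abs_le (SignType.sign x * δ)
      rwa [abs_mul, abs_sign_of_ne_zero hx, one_mul] at this
    nlinarith
  calc |x + t * δ| = |SignType.sign x * (x + t * δ)| := by
        rw [abs_mul, abs_sign_of_ne_zero hx, one_mul]
    _ = |x| + t * absDirDeriv x δ := by
        rw [absDirDeriv_of_ne_zero hx, ← abs_of_pos hpos, mul_add, sign_mul_self]
        ring_nf

section WeightedAbs

variable {ι : Type*} [Fintype ι]

noncomputable def weightedAbsDirDeriv (w x d : ι → ℝ) : ℝ :=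
  ∑ j, w j * absDirDeriv (x j) (d j)

lemma continuous_weightedAbsDirDeriv (w x : ι → ℝ) : Continuous (weightedAbsDirDeriv w x) :=
  continuous_finsetSum _ fun j _ =>
    continuous_const.mul ((continuous_absDirDeriv _).comp (continuous_apply j))

lemma eventually_sum_comp_abs_add_smul_le {ψ Dψ : ℝ → ℝ} (hψ : ConcaveOn ℝ (Ici 0) ψ)
    (hDψ : ∀ t ∈ Ici (0 : ℝ), HasDerivWithinAt ψ (Dψ t) (Ici t) t) (x d : ι → ℝ) :
    ∀ᶠ t in 𝓝[>] 0, ∑ j, ψ |(x + t • d) j| ≤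
      ∑ j, ψ |x j| + t * weightedAbsDirDeriv (fun j => Dψ |x j|) x d := by
  filter_upwards [eventually_all.2 fun j => eventually_abs_add_mul_eq (x j) (d j)] with t ht
  rw [weightedAbsDirDeriv, Finset.mul_sum, ← Finset.sum_add_distrib]
  refine Finset.sum_le_sum fun j _ => ?_
  have := hψ.le_tangent_of_forall_hasDerivWithinAt_Ici hDψ (abs_nonneg (x j))
    (abs_nonneg (x j + t * d j))
  simp only [Pi.add_apply, Pi.smul_apply, smul_eq_mul, ht j] at this ⊢
  linarith

variable [DecidableEq ι] (w x : ι → ℝ)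

lemma weightedAbsDirDeriv_single (j : ι) (α : ℝ) :
    weightedAbsDirDeriv w x (Pi.single j α) = w j * absDirDeriv (x j) α := by
  refine (Fintype.sum_eq_single j fun l hl => ?_).trans (by simp)
  simp [Pi.single_eq_of_ne hl, absDirDeriv_zero_right]

lemma weightedAbsDirDeriv_single_add_single {j k : ι} (hjk : j ≠ k) (α β : ℝ) :
    weightedAbsDirDeriv w x (Pi.single j α + Pi.single k β) =
      w j * absDirDeriv (x j) α + w k * absDirDeriv (x k) β := by
  refine (Fintype.sum_eq_add j k hjk fun l hl => ?_).trans (by simp [hjk, hjk.symm])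
  simp [Pi.single_eq_of_ne hl.1, Pi.single_eq_of_ne hl.2, absDirDeriv_zero_right]

variable {w x}

lemma exists_multiplier_of_weightedAbsDirDeriv_nonneg {v : ι → ℝ} (hw : ∀ j, 0 < w j)
    (hx : x ≠ 0) (h : ∀ d, 0 ≤ v ⬝ᵥ d → 0 ≤ weightedAbsDirDeriv w x d) :
    ∃ μ, 0 ≤ μ ∧ ∀ j, (x j ≠ 0 → μ * v j = w j * SignType.sign (x j)) ∧ |μ * v j| ≤ w j := by
  have horth : ∀ d, v ⬝ᵥ d = 0 →
      0 ≤ weightedAbsDirDeriv w x d ∧ 0 ≤ weightedAbsDirDeriv w x (-d) := fun d hd =>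
    ⟨h d hd.ge, h (-d) (by simp [hd])⟩
  obtain ⟨j₀, hj₀⟩ : ∃ j, x j ≠ 0 := Function.ne_iff.1 hx
  set p := w j₀ * SignType.sign (x j₀)
  have hp : |p| = w j₀ := by rw [abs_mul, abs_sign_of_ne_zero hj₀, abs_of_pos (hw j₀), mul_one]
  have hv₀ : v j₀ ≠ 0 := by
    intro hv
    have := horth (Pi.single j₀ 1) (by simp [hv])
    simp only [← Pi.single_neg, weightedAbsDirDeriv_single, absDirDeriv_of_ne_zero hj₀] at this
    have : p = 0 := by linarith [this.1, this.2]
    linarith [hw j₀, abs_eq_zero.2 this]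
  refine ⟨p / v j₀, ?_, fun j => ?_⟩
  · have := h (Pi.single j₀ (v j₀)) (by simpa using mul_self_nonneg (v j₀))
    rw [weightedAbsDirDeriv_single, absDirDeriv_of_ne_zero hj₀, ← mul_assoc] at this
    rw [show p / v j₀ = p * v j₀ / (v j₀ * v j₀) by field_simp]
    exact div_nonneg this (mul_self_nonneg _)
  rcases eq_or_ne j j₀ with rfl | hj
  · exact ⟨fun _ => div_mul_cancel₀ p hv₀, by rw [div_mul_cancel₀ p hv₀, hp]⟩
  -- `v j₀ • e j - v j • e j₀` is orthogonal to `v`, so it and its negative are both admissible.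
  obtain ⟨h₁, h₂⟩ := horth (Pi.single j (v j₀) + Pi.single j₀ (-v j)) (by simp; ring)
  rw [neg_add, ← Pi.single_neg, ← Pi.single_neg, neg_neg] at h₂
  rw [weightedAbsDirDeriv_single_add_single w x hj, absDirDeriv_of_ne_zero hj₀] at h₁ h₂
  rw [div_mul_eq_mul_div]
  by_cases hxj : x j = 0
  · rw [absDirDeriv_of_eq_zero hxj, abs_neg] at h₂
    rw [absDirDeriv_of_eq_zero hxj] at h₁
    refine ⟨fun h => absurd hxj h, ?_⟩
    rw [abs_div, div_le_iff₀ (abs_pos.2 hv₀), abs_le]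
    constructor <;> linarith
  · rw [absDirDeriv_of_ne_zero hxj] at h₁ h₂
    have hpj : p * v j / v j₀ = w j * SignType.sign (x j) := by
      rw [div_eq_iff hv₀]
      linarith
    refine ⟨fun _ => hpj, ?_⟩
    rw [hpj, abs_mul, abs_sign_of_ne_zero hxj, abs_of_pos (hw j), mul_one]

lemma exists_subgradient_of_weightedAbsDirDeriv_nonneg {v : ι → ℝ} (hw : ∀ j, 0 < w j)
    (hx : x ≠ 0) (h : ∀ d, 0 ≤ v ⬝ᵥ d → 0 ≤ weightedAbsDirDeriv w x d) :
    ∃ μ, 0 ≤ μ ∧ ∃ g : ι → ℝ,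
      (∀ j, g j * x j = |x j| ∧ |g j| ≤ 1) ∧ ∀ j, w j * g j = μ * v j := by
  obtain ⟨μ, hμ, hmul⟩ := exists_multiplier_of_weightedAbsDirDeriv_nonneg hw hx h
  refine ⟨μ, hμ, fun j => μ * v j / w j, fun j => ⟨?_, ?_⟩, fun j => ?_⟩ <;> dsimp only
  · by_cases hxj : x j = 0
    · simp [hxj]
    · rw [(hmul j).1 hxj, mul_div_cancel_left₀ _ (hw j).ne', sign_mul_self]
  · rw [abs_div, abs_of_pos (hw j), div_le_one (hw j)]
    exact (hmul j).2
  · exact mul_div_cancel₀ _ (hw j).ne'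

end WeightedAbs

lemma sum_abs_add_le_of_mul_eq_abs {ι : Type*} [Fintype ι] {x g : ι → ℝ}
    (hg : ∀ j, g j * x j = |x j| ∧ |g j| ≤ 1) (y : ι → ℝ) :
    ∑ j, |x j| + ∑ j, g j * (y j - x j) ≤ ∑ j, |y j| := by
  rw [← Finset.sum_add_distrib]
  refine Finset.sum_le_sum fun j _ => ?_
  have hgy : g j * y j ≤ |y j| := calc
    g j * y j ≤ |g j| * |y j| := by rw [← abs_mul]; exact le_abs_self _
    _ ≤ |y j| := mul_le_of_le_one_left (abs_nonneg _) (hg j).2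
  linarith [(hg j).1]

lemma comp_sq_sub_mul_le {φ Dφ : ℝ → ℝ} (hφ : ConcaveOn ℝ (Ici 0) φ)
    (hDφ : ∀ t ∈ Ici (0 : ℝ), HasDerivWithinAt φ (Dφ t) (Ici t) t) (r s t : ℝ) :
    φ ((r - t * s) ^ 2) ≤ φ (r ^ 2) - t * (Dφ (r ^ 2) * (2 * r * s - t * s ^ 2)) := by
  have := hφ.le_tangent_of_forall_hasDerivWithinAt_Ici hDφ (sq_nonneg r) (sq_nonneg (r - t * s))
  linarith

lemma eventually_sum_comp_sq_sub_mulVec_le {ι κ : Type*} [Fintype ι] [Fintype κ] {φ Dφ : ℝ → ℝ}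
    (hφ : ConcaveOn ℝ (Ici 0) φ) (hDφ : ∀ t ∈ Ici (0 : ℝ), HasDerivWithinAt φ (Dφ t) (Ici t) t)
    (A : Matrix ι κ ℝ) (b : ι → ℝ) {x : κ → ℝ} {σ : ℝ}
    (hx : ∑ i, φ ((b - A *ᵥ x) i ^ 2) ≤ σ) {d : κ → ℝ}
    (hd : ∑ i, φ ((b - A *ᵥ x) i ^ 2) < σ ∨
      0 < ((fun i => Dφ ((b - A *ᵥ x) i ^ 2) * (b - A *ᵥ x) i) ᵥ* A) ⬝ᵥ d) :
    ∀ᶠ t : ℝ in 𝓝[>] 0, ∑ i, φ ((b - A *ᵥ (x + t • d)) i ^ 2) ≤ σ := by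
  set r := b - A *ᵥ x
  set G : ℝ → ℝ := fun t => ∑ i, Dφ (r i ^ 2) * (2 * r i * (A *ᵥ d) i - t * (A *ᵥ d) i ^ 2)
  have hbound : ∀ t, ∑ i, φ ((b - A *ᵥ (x + t • d)) i ^ 2) ≤ ∑ i, φ (r i ^ 2) - t * G t := by
    intro t
    rw [Finset.mul_sum, ← Finset.sum_sub_distrib]
    refine Finset.sum_le_sum fun i _ => ?_
    have hres : (b - A *ᵥ (x + t • d)) i = r i - t * (A *ᵥ d) i := by
      simp [r, mulVec_add, mulVec_smul]
      ring
    rw [hres]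
    exact comp_sq_sub_mul_le hφ hDφ (r i) ((A *ᵥ d) i) t
  have hG : Tendsto G (𝓝[>] 0) (𝓝 (G 0)) :=
    ((by fun_prop : Continuous G).tendsto 0).mono_left nhdsWithin_le_nhds
  have hG0 : G 0 = 2 * ((fun i => Dφ (r i ^ 2) * r i) ᵥ* A ⬝ᵥ d) := by
    rw [← dotProduct_mulVec]
    simp only [G, dotProduct, Finset.mul_sum]
    congr! 1 with i
    ring
  rcases hd with hlt | hpos
  · have hlim : Tendsto (fun t : ℝ => ∑ i, φ (r i ^ 2) - t * G t) (𝓝[>] 0)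
        (𝓝 (∑ i, φ (r i ^ 2))) := by
      simpa using tendsto_const_nhds.sub ((tendsto_nhdsWithin_of_tendsto_nhds tendsto_id).mul hG)
    filter_upwards [hlim.eventually_lt_const hlt] with t ht using (hbound t).trans ht.le
  · filter_upwards [self_mem_nhdsWithin, hG.eventually_const_lt (by rw [hG0]; linarith)]
      with t (ht : 0 < t) hGt
    nlinarith [hbound t]
theorem kkt_at_local_min_general
    (m n : ℕ) (ψ Dψ φ Dφ : ℝ → ℝ)
    (a : Fin m → Fin n → ℝ) (b : Fin m → ℝ) (σ : ℝ) (xs : Fin n → ℝ)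
    -- Assumption 1.1(i) on ψ
    (hψconc : StrictConcaveOn ℝ (Set.Ici 0) ψ)
    (hψderiv : ∀ t ∈ Set.Ici (0:ℝ), HasDerivWithinAt ψ (Dψ t) (Set.Ici t) t)
    (hψpos : ∀ t ∈ Set.Ici (0:ℝ), 0 < Dψ t)
    -- Assumption 1.1(ii) on φ
    (hφconc : ConcaveOn ℝ (Set.Ici 0) φ)
    (hφderiv : ∀ t ∈ Set.Ici (0:ℝ), HasDerivWithinAt φ (Dφ t) (Set.Ici t) t)
    -- full row rank and σ range
    (hσlt : σ < ∑ i, φ (b i ^ 2))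
    -- xs is a feasible local minimizer
    (hfeas : ∑ i, φ ((b i - ∑ j, a i j * xs j) ^ 2) ≤ σ)
    (hmin : IsLocalMinOn (fun x : Fin n → ℝ => ∑ i, ψ |x i|)
      {x : Fin n → ℝ | ∑ i, φ ((b i - ∑ j, a i j * x j) ^ 2) ≤ σ} xs)
    -- MFCQ at xs
    (hmfcq : (∑ i, φ ((b i - ∑ j, a i j * xs j) ^ 2) = σ) →
      (fun j => ∑ i, Dφ ((b i - ∑ j', a i j' * xs j') ^ 2)
          * (b i - ∑ j', a i j' * xs j') * a i j) ≠ (0 : Fin n → ℝ)) :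
    ∃ lam : ℝ, 0 ≤ lam ∧
      lam * ((∑ i, φ ((b i - ∑ j, a i j * xs j) ^ 2)) - σ) = 0 ∧
      ∃ g : Fin n → ℝ,
        (∀ y : Fin n → ℝ, (∑ i, |xs i|) + ∑ i, g i * (y i - xs i) ≤ ∑ i, |y i|) ∧
        ∀ j, Dψ |xs j| * g j
            - 2 * lam * ∑ i, Dφ ((b i - ∑ j', a i j' * xs j') ^ 2)
                * (b i - ∑ j', a i j' * xs j') * a i j = 0 := by
  set v : Fin n → ℝ := (fun i => Dφ ((b - a *ᵥ xs) i ^ 2) * (b - a *ᵥ xs) i) ᵥ* a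
  set w : Fin n → ℝ := fun j => Dψ |xs j|
  have hw : ∀ j, 0 < w j := fun j => hψpos _ (mem_Ici.2 (abs_nonneg _))
  have hxs : xs ≠ 0 := by
    rintro rfl
    simp only [Pi.zero_apply, mul_zero, Finset.sum_const_zero, sub_zero] at hfeas
    linarith
  have hdescent : ∀ d, (∑ i, φ ((b - a *ᵥ xs) i ^ 2) < σ ∨ 0 < v ⬝ᵥ d) →
      0 ≤ weightedAbsDirDeriv w xs d := fun d hd =>
    hmin.nonneg_of_eventually_le_add_mul
      (eventually_sum_comp_sq_sub_mulVec_le hφconc hφderiv a b hfeas hd)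
      (eventually_sum_comp_abs_add_smul_le hψconc.concaveOn hψderiv xs d)
  have hactive : ∑ i, φ ((b i - ∑ j, a i j * xs j) ^ 2) = σ := by
    refine hfeas.eq_or_lt.resolve_right fun hlt => ?_
    obtain ⟨j, hj⟩ : ∃ j, xs j ≠ 0 := Function.ne_iff.1 hxs
    have := hdescent (Pi.single j (-xs j)) (.inl hlt)
    rw [weightedAbsDirDeriv_single, absDirDeriv_of_ne_zero hj, mul_neg, sign_mul_self] at this
    nlinarith [hw j, abs_pos.2 hj]
  have hv : 0 < v ⬝ᵥ v := by
    simpa using (dotProduct_star_self_pos_iff (v := v)).2 (hmfcq hactive)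
  obtain ⟨μ, hμ, g, hg, hwg⟩ := exists_subgradient_of_weightedAbsDirDeriv_nonneg hw hxs
    fun d => nonneg_of_nonneg_on_open_halfspace (continuous_weightedAbsDirDeriv w xs)
      (dotProductBilin ℝ ℝ v) hv (fun d hd => hdescent d (.inr hd))
  refine ⟨μ / 2, by positivity, by rw [hactive, sub_self, mul_zero], g,
    sum_abs_add_le_of_mul_eq_abs hg, fun j => ?_⟩
  change w j * g j - 2 * (μ / 2) * v j = 0
  rw [hwg j]
  ring

/-- Proposition 2.2: if `xs` is a local minimizer of
`min ∑ ψ(|x i|) s.t. ∑ φ((b i - aᵢᵀx)²) ≤ σ` and the MFCQ holds at `xs`, then there is a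
multiplier `lam ≥ 0` with complementary slackness and
`0 ∈ Ψ'₊(|xs|) ∘ ∂‖xs‖₁ - 2 lam ∑ i φ'₊((b i - aᵢᵀxs)²)(b i - aᵢᵀxs) a i`.
`Dψ`/`Dφ` denote the (right) derivatives of `ψ`/`φ`, and the subdifferential of the ℓ₁-norm
is expressed via its defining inequality. -/
theorem kkt_at_local_min
    (m n : ℕ) (ψ Dψ φ Dφ : ℝ → ℝ)
    (a : Fin m → Fin n → ℝ) (b : Fin m → ℝ) (σ : ℝ) (xs : Fin n → ℝ)
    -- Assumption 1.1(i) on ψ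
    (hψcont : ContinuousOn ψ (Set.Ici 0))
    (hψconc : StrictConcaveOn ℝ (Set.Ici 0) ψ)
    (hψ0 : ψ 0 = 0)
    (hψnonneg : ∀ t ∈ Set.Ici (0:ℝ), 0 ≤ ψ t)
    (hψtop : Filter.Tendsto ψ Filter.atTop Filter.atTop)
    (hψderiv : ∀ t ∈ Set.Ici (0:ℝ), HasDerivWithinAt ψ (Dψ t) (Set.Ici t) t)
    (hψpos : ∀ t ∈ Set.Ici (0:ℝ), 0 < Dψ t)
    -- Assumption 1.1(ii) on φ
    (hφcont : ContinuousOn φ (Set.Ici 0))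
    (hφconc : ConcaveOn ℝ (Set.Ici 0) φ)
    (hφ0 : φ 0 = 0)
    (hφnonneg : ∀ t ∈ Set.Ici (0:ℝ), 0 ≤ φ t)
    (hφderiv : ∀ t ∈ Set.Ici (0:ℝ), HasDerivWithinAt φ (Dφ t) (Set.Ici t) t)
    (hφpos : ∀ t ∈ Set.Ici (0:ℝ), 0 ≤ Dφ t)
    (hφ00 : 0 < Dφ 0)
    -- full row rank and σ range
    (hrank : LinearIndependent ℝ a)
    (hσpos : 0 < σ) (hσlt : σ < ∑ i, φ (b i ^ 2))
    -- xs is a feasible local minimizer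
    (hfeas : ∑ i, φ ((b i - ∑ j, a i j * xs j) ^ 2) ≤ σ)
    (hmin : IsLocalMinOn (fun x : Fin n → ℝ => ∑ i, ψ |x i|)
      {x : Fin n → ℝ | ∑ i, φ ((b i - ∑ j, a i j * x j) ^ 2) ≤ σ} xs)
    -- MFCQ at xs
    (hmfcq : (∑ i, φ ((b i - ∑ j, a i j * xs j) ^ 2) = σ) →
      (fun j => ∑ i, Dφ ((b i - ∑ j', a i j' * xs j') ^ 2)
          * (b i - ∑ j', a i j' * xs j') * a i j) ≠ (0 : Fin n → ℝ)) :
    ∃ lam : ℝ, 0 ≤ lam ∧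
      lam * ((∑ i, φ ((b i - ∑ j, a i j * xs j) ^ 2)) - σ) = 0 ∧
      ∃ g : Fin n → ℝ,
        (∀ y : Fin n → ℝ, (∑ i, |xs i|) + ∑ i, g i * (y i - xs i) ≤ ∑ i, |y i|) ∧
        ∀ j, Dψ |xs j| * g j
            - 2 * lam * ∑ i, Dφ ((b i - ∑ j', a i j' * xs j') ^ 2)
                * (b i - ∑ j', a i j' * xs j') * a i j = 0 :=
  kkt_at_local_min_general m n ψ Dψ φ Dφ a b σ xs hψconc hψderiv hψpos hφconc hφderiv hσlt hfeas
    hmin hmfcq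
end

section
/- Suppose x^k is feasible, i.e., ∑_{i=1}^m φ((b_i - a_iᵀx^k)²) ≤ σ, where φ is concave with φ(0)=0 and nonnegative right derivative, σ ∈ (0, ∑φ(b_i²)) is not an integer multiple of sup φ, and A has full row rank. Define σ_k := σ + ∑_{i=1}^m φ'₊((b_i-a_iᵀx^k)²)(b_i-a_iᵀx^k)² - ∑_{i=1}^m φ((b_i-a_iᵀx^k)²). Then 0 < σ_k ≤ σ. -/
/-!
By concavity, the tangent line of `φ` at `t ≥ 0` lies above the graph; at `0` this reads
`φ'₊(t) t ≤ φ(t)`, which gives `σ_k ≤ σ`. If `σ_k ≤ 0`, feasibility forces every term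
`φ'₊(tᵢ) tᵢ` to vanish and `∑ φ(tᵢ) = σ`. Then each `tᵢ > 0` is a point with horizontal
tangent, hence a maximiser of `φ`, while `φ(tᵢ) = 0` for `tᵢ = 0`; so `σ` is `k · sup φ` with
`k = #{i | tᵢ > 0} ∈ [1, m]`, which is excluded.
-/

open Set Finset

namespace ConcaveOn

variable {f : ℝ → ℝ} {a x y f' : ℝ}

theorem le_add_mul_sub_of_hasDerivWithinAt_Ioi (hf : ConcaveOn ℝ (Ici a) f) (hx : a ≤ x)
    (hy : a ≤ y) (hf' : HasDerivWithinAt f f' (Ioi x) x) : f y ≤ f x + f' * (y - x) := by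
  rcases lt_trichotomy y x with hyx | rfl | hxy
  · have hslope : f' ≤ (f x - f y) / (x - y) := by
      refine le_of_tendsto ((hasDerivWithinAt_iff_tendsto_slope' Set.self_notMem_Ioi).mp hf') ?_
      filter_upwards [self_mem_nhdsWithin] with u (hu : x < u)
      rw [slope_def_field]
      exact hf.slope_anti_adjacent hy (hx.trans hu.le) hyx hu
    have := (le_div_iff₀ (sub_pos.mpr hyx)).mp hslope
    linarith
  · simp
  · have hslope := hf.slope_le_of_hasDerivWithinAt_Ioi hx hy hxy hf'
    rw [slope_def_field, div_le_iff₀ (sub_pos.mpr hxy)] at hslope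
    linarith

theorem mul_le_of_hasDerivWithinAt_Ioi (hf : ConcaveOn ℝ (Ici 0) f) (h0 : f 0 = 0)
    (hx : 0 ≤ x) (hf' : HasDerivWithinAt f f' (Ioi x) x) : f' * x ≤ f x := by
  have := hf.le_add_mul_sub_of_hasDerivWithinAt_Ioi hx le_rfl hf'
  linarith

theorem isMaxOn_of_hasDerivWithinAt_Ioi_zero (hf : ConcaveOn ℝ (Ici a) f) (hx : a ≤ x)
    (hf' : HasDerivWithinAt f 0 (Ioi x) x) : IsMaxOn f (Ici a) x := fun y (hy : a ≤ y) => by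
  simpa using hf.le_add_mul_sub_of_hasDerivWithinAt_Ioi hx hy hf'

end ConcaveOn

theorem IsMaxOn.iSup_coe_ereal_eq {α : Type*} {f : α → ℝ} {s : Set α} {x : α} (hx : x ∈ s)
    (h : IsMaxOn f s x) : ⨆ u : s, ((f u : ℝ) : EReal) = f x :=
  (h.comp_mono EReal.coe_strictMono.monotone).iSup_eq hx

theorem ConcaveOn.exists_sum_eq_card_mul_iSup {ι : Type*} [Fintype ι] {φ : ℝ → ℝ}
    (hφ : ConcaveOn ℝ (Ici 0) φ) (h0 : φ 0 = 0) {t d : ι → ℝ} (ht : ∀ i, 0 ≤ t i)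
    (hd : ∀ i, HasDerivWithinAt φ (d i) (Ioi (t i)) (t i)) (hdt : ∀ i, d i * t i = 0)
    (hsum : ∑ i, φ (t i) ≠ 0) :
    ∃ k : ℕ, 1 ≤ k ∧ k ≤ Fintype.card ι ∧
      ((∑ i, φ (t i) : ℝ) : EReal) =
        ((k : ℝ) : EReal) * ⨆ u : Ici (0 : ℝ), ((φ u : ℝ) : EReal) := by
  classical
  set P := univ.filter fun i => t i ≠ 0
  have hmax : ∀ i ∈ P, IsMaxOn φ (Ici 0) (t i) := fun i hi => by
    have hdi : d i = 0 := (mul_eq_zero.mp (hdt i)).resolve_right (mem_filter.mp hi).2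
    exact hφ.isMaxOn_of_hasDerivWithinAt_Ioi_zero (ht i) (hdi ▸ hd i)
  have hsumP : ∑ i, φ (t i) = ∑ i ∈ P, φ (t i) := by
    refine (sum_subset (subset_univ P) fun i _ hi => ?_).symm
    have hti : t i = 0 := by simpa [P] using hi
    rw [hti, h0]
  obtain ⟨i₀, hi₀⟩ : P.Nonempty := nonempty_of_sum_ne_zero (hsumP ▸ hsum)
  have hconst : ∀ i ∈ P, φ (t i) = φ (t i₀) := fun i hi =>
    le_antisymm (hmax i₀ hi₀ (ht i)) (hmax i hi (ht i₀))
  refine ⟨#P, card_pos.mpr ⟨i₀, hi₀⟩, card_le_univ P, ?_⟩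
  rw [IsMaxOn.iSup_coe_ereal_eq (s := Ici 0) (ht i₀) (hmax i₀ hi₀), ← EReal.coe_mul, hsumP,
    sum_congr rfl hconst, sum_const, nsmul_eq_mul]

theorem sigma_k_bounds_general
    (m n : ℕ) (φ D : ℝ → ℝ)
    (a : Fin m → Fin n → ℝ) (b : Fin m → ℝ) (σ : ℝ) (xk : Fin n → ℝ)
    (hconc : ConcaveOn ℝ (Set.Ici 0) φ)
    (h0 : φ 0 = 0)
    (hderiv : ∀ t ∈ Set.Ici (0:ℝ), HasDerivWithinAt φ (D t) (Set.Ici t) t)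
    (hDnonneg : ∀ t ∈ Set.Ici (0:ℝ), 0 ≤ D t)
    (hσpos : 0 < σ)
    (hnotmul : ∀ k : ℕ, 1 ≤ k → k ≤ m →
      (σ : EReal) ≠ ((k : ℝ) : EReal) * (⨆ t : Set.Ici (0:ℝ), ((φ t : ℝ) : EReal)))
    (hfeas : ∑ i, φ ((b i - ∑ j, a i j * xk j) ^ 2) ≤ σ) :
    0 < σ + (∑ i, D ((b i - ∑ j, a i j * xk j) ^ 2) * (b i - ∑ j, a i j * xk j) ^ 2)
        - ∑ i, φ ((b i - ∑ j, a i j * xk j) ^ 2) ∧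
    σ + (∑ i, D ((b i - ∑ j, a i j * xk j) ^ 2) * (b i - ∑ j, a i j * xk j) ^ 2)
        - ∑ i, φ ((b i - ∑ j, a i j * xk j) ^ 2) ≤ σ := by
  set t : Fin m → ℝ := fun i => (b i - ∑ j, a i j * xk j) ^ 2
  have ht : ∀ i, 0 ≤ t i := fun i => sq_nonneg _
  have hd : ∀ i, HasDerivWithinAt φ (D (t i)) (Ioi (t i)) (t i) := fun i =>
    (hderiv _ (ht i)).mono Ioi_subset_Ici_self
  have hle : ∀ i ∈ Finset.univ, D (t i) * t i ≤ φ (t i) := fun i _ =>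
    hconc.mul_le_of_hasDerivWithinAt_Ioi h0 (ht i) (hd i)
  have hnonneg : ∀ i ∈ Finset.univ, 0 ≤ D (t i) * t i := fun i _ =>
    mul_nonneg (hDnonneg _ (ht i)) (ht i)
  refine ⟨?_, by linarith [sum_le_sum hle]⟩
  by_contra! hσk
  have hS : ∑ i, D (t i) * t i = 0 := le_antisymm (by linarith) (sum_nonneg hnonneg)
  have hF : ∑ i, φ (t i) = σ := by linarith
  obtain ⟨k, hk₁, hkm, hk⟩ := hconc.exists_sum_eq_card_mul_iSup h0 ht hd
    (fun i => (sum_eq_zero_iff_of_nonneg hnonneg).mp hS i (mem_univ i)) (hF ▸ hσpos.ne')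
  exact hnotmul k hk₁ (by simpa using hkm) (hF ▸ hk)

/-- Lemma 3.1(i): if `xk` is feasible, then
`σk := σ + ∑ D((bᵢ-aᵢᵀxk)²)(bᵢ-aᵢᵀxk)² - ∑ φ((bᵢ-aᵢᵀxk)²)` satisfies `0 < σk ≤ σ`.
`D` is the right derivative of `φ` on `[0,∞)`. -/
theorem sigma_k_bounds
    (m n : ℕ) (φ D : ℝ → ℝ)
    (a : Fin m → Fin n → ℝ) (b : Fin m → ℝ) (σ : ℝ) (xk : Fin n → ℝ)
    (hcont : ContinuousOn φ (Set.Ici 0))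
    (hconc : ConcaveOn ℝ (Set.Ici 0) φ)
    (h0 : φ 0 = 0)
    (hnonneg : ∀ t ∈ Set.Ici (0:ℝ), 0 ≤ φ t)
    (hderiv : ∀ t ∈ Set.Ici (0:ℝ), HasDerivWithinAt φ (D t) (Set.Ici t) t)
    (hDnonneg : ∀ t ∈ Set.Ici (0:ℝ), 0 ≤ D t)
    (hD0 : 0 < D 0)
    (hrank : LinearIndependent ℝ a)
    (hσpos : 0 < σ) (hσlt : σ < ∑ i, φ (b i ^ 2))
    (hnotmul : ∀ k : ℕ, 1 ≤ k → k ≤ m →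
      (σ : EReal) ≠ ((k : ℝ) : EReal) * (⨆ t : Set.Ici (0:ℝ), ((φ t : ℝ) : EReal)))
    (hfeas : ∑ i, φ ((b i - ∑ j, a i j * xk j) ^ 2) ≤ σ) :
    0 < σ + (∑ i, D ((b i - ∑ j, a i j * xk j) ^ 2) * (b i - ∑ j, a i j * xk j) ^ 2)
        - ∑ i, φ ((b i - ∑ j, a i j * xk j) ^ 2) ∧
    σ + (∑ i, D ((b i - ∑ j, a i j * xk j) ^ 2) * (b i - ∑ j, a i j * xk j) ^ 2)
        - ∑ i, φ ((b i - ∑ j, a i j * xk j) ^ 2) ≤ σ :=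
  sigma_k_bounds_general m n φ D a b σ xk hconc h0 hderiv hDnonneg hσpos hnotmul hfeas
end

section
/- With notation as above (y ≠ 0, ‖v‖² ≤ σ) and assuming additionally ‖v‖ ≤ √ε·√σ for some ε ∈ (0,1], the larger root q = ((vᵀy)+√Δ)/‖y‖² satisfies q ≥ (1 − 3√ε)·√σ/‖y‖. -/
/-!
By Cauchy–Schwarz `⟪v, y⟫ ≥ -‖v‖ ‖y‖`, and dropping `⟪v, y⟫²` from `Δ` gives
`√Δ ≥ ‖y‖ √(σ - ‖v‖²)`. With `t = √ε` and `‖v‖ ≤ t √σ` this yields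
`‖y‖² q ≥ ‖y‖ (√(1 - t²) - t) √σ`, and `√(1 - t²) ≥ 1 - 2t` for `t ≥ 0`.
-/

theorem one_sub_two_mul_le_sqrt_one_sub_sq {t : ℝ} (ht : 0 ≤ t) : 1 - 2 * t ≤ √(1 - t ^ 2) := by
  rcases le_or_gt (1 / 2) t with h | h
  · linarith [Real.sqrt_nonneg (1 - t ^ 2)]
  · exact Real.le_sqrt_of_sq_le (by nlinarith)

theorem mul_sqrt_sub_sq_le_sqrt_discrim {n : ℝ} (hn : 0 ≤ n) (a x σ : ℝ) :
    n * √(σ - x ^ 2) ≤ √(a ^ 2 - n ^ 2 * (x ^ 2 - σ)) := by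
  calc n * √(σ - x ^ 2) = √(n ^ 2 * (σ - x ^ 2)) := by
        rw [Real.sqrt_mul (sq_nonneg n), Real.sqrt_sq hn]
    _ ≤ _ := Real.sqrt_le_sqrt (by nlinarith [sq_nonneg a])

theorem one_sub_three_mul_mul_sqrt_le {x t σ : ℝ} (hx : 0 ≤ x) (ht : 0 ≤ t) (hσ : 0 ≤ σ)
    (hxt : x ≤ t * √σ) : (1 - 3 * t) * √σ ≤ √(σ - x ^ 2) - x := by
  have hx2 : x ^ 2 ≤ t ^ 2 * σ := by
    calc x ^ 2 ≤ (t * √σ) ^ 2 := pow_le_pow_left₀ hx hxt 2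
      _ = t ^ 2 * σ := by rw [mul_pow, Real.sq_sqrt hσ]
  have hroot : √(1 - t ^ 2) * √σ ≤ √(σ - x ^ 2) := by
    rw [← Real.sqrt_mul' _ hσ]
    exact Real.sqrt_le_sqrt (by nlinarith)
  nlinarith [mul_le_mul_of_nonneg_right (one_sub_two_mul_le_sqrt_one_sub_sq ht)
    (Real.sqrt_nonneg σ)]

theorem norm_mul_sqrt_sub_le_inner_add_sqrt_discrim {E : Type*} [NormedAddCommGroup E]
    [InnerProductSpace ℝ E] (v y : E) (σ : ℝ) :
    ‖y‖ * (√(σ - ‖v‖ ^ 2) - ‖v‖) ≤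
      inner ℝ v y + √((inner ℝ v y) ^ 2 - ‖y‖ ^ 2 * (‖v‖ ^ 2 - σ)) := by
  have hcs : -(‖v‖ * ‖y‖) ≤ inner ℝ v y := neg_le_of_abs_le (abs_real_inner_le_norm v y)
  linarith [mul_sqrt_sub_sq_le_sqrt_discrim (norm_nonneg y) (inner ℝ v y) ‖v‖ σ]

theorem larger_root_lower_bound_general
    (m : ℕ) (v y : EuclideanSpace ℝ (Fin m)) (σ Δ q ε : ℝ)
    (hσ : 0 < σ)
    (hvε : ‖v‖ ≤ Real.sqrt ε * Real.sqrt σ)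
    (hΔ : Δ = (inner ℝ v y : ℝ) ^ 2 - ‖y‖ ^ 2 * (‖v‖ ^ 2 - σ))
    (hq : q = ((inner ℝ v y : ℝ) + Real.sqrt Δ) / ‖y‖ ^ 2) :
    (1 - 3 * Real.sqrt ε) * Real.sqrt σ / ‖y‖ ≤ q := by
  subst hΔ hq
  calc (1 - 3 * √ε) * √σ / ‖y‖ = ‖y‖ * ((1 - 3 * √ε) * √σ) / ‖y‖ ^ 2 := by
        rw [mul_comm ‖y‖, sq, mul_div_assoc _ ‖y‖, div_self_mul_self', div_eq_mul_inv]
    _ ≤ ‖y‖ * (√(σ - ‖v‖ ^ 2) - ‖v‖) / ‖y‖ ^ 2 := by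
        gcongr
        exact one_sub_three_mul_mul_sqrt_le (norm_nonneg v) (Real.sqrt_nonneg ε) hσ.le hvε
    _ ≤ _ := by
        gcongr
        exact norm_mul_sqrt_sub_le_inner_add_sqrt_discrim v y σ

/-- with `y ≠ 0`, `‖v‖² ≤ σ` and additionally `‖v‖ ≤ √ε √σ` for some
`ε ∈ (0,1]`, the larger root `q = (⟪v,y⟫ + √Δ)/‖y‖²` satisfies
`q ≥ (1 − 3√ε) √σ / ‖y‖`. -/
theorem larger_root_lower_bound
    (m : ℕ) (v y : EuclideanSpace ℝ (Fin m)) (σ Δ q ε : ℝ)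
    (hy : y ≠ 0) (hσ : 0 < σ) (hv : ‖v‖ ^ 2 ≤ σ)
    (hεpos : 0 < ε) (hεle : ε ≤ 1)
    (hvε : ‖v‖ ≤ Real.sqrt ε * Real.sqrt σ)
    (hΔ : Δ = (inner ℝ v y : ℝ) ^ 2 - ‖y‖ ^ 2 * (‖v‖ ^ 2 - σ))
    (hq : q = ((inner ℝ v y : ℝ) + Real.sqrt Δ) / ‖y‖ ^ 2) :
    (1 - 3 * Real.sqrt ε) * Real.sqrt σ / ‖y‖ ≤ q :=
  larger_root_lower_bound_general m v y σ Δ q ε hσ hvε hΔ hq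
end

section
/- Let x^k be feasible for ∑φ((b_i-a_iᵀx)²) ≤ σ and define A_k, b^k, σ_k as in the DIRL₁ algorithm. If x is feasible for the subproblem, i.e., ‖A_k x - b^k‖² ≤ σ_k, then x is feasible for the original constraint: ∑_{i=1}^m φ((b_i - a_iᵀx)²) ≤ σ. -/
/-!
Summing the concavity majorization `φ s ≤ φ t + φ'₊(t) (s - t)` at `t = (bᵢ - aᵢᵀxᵏ)²`,
`s = (bᵢ - aᵢᵀx)²` bounds `∑ φ((bᵢ - aᵢᵀx)²)` by `∑ φ((bᵢ - aᵢᵀxᵏ)²)` plus the linear terms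
`∑ φ'₊(t) (s - t) = ‖Aₖx - bᵏ‖² - ‖bᵏ - Aₖxᵏ‖²`, and `σₖ` is defined precisely so that this
bound is `σ` whenever `‖Aₖx - bᵏ‖² ≤ σₖ`.
-/

open Set Filter Finset

namespace ConcaveOn

variable {S : Set ℝ} {f : ℝ → ℝ} {f' s t u : ℝ}

lemma le_slope_of_hasDerivWithinAt_Ioi_of_lt (hfc : ConcaveOn ℝ S f) (hs : s ∈ S) (hu : u ∈ S)
    (hst : s < t) (htu : t < u) (hf' : HasDerivWithinAt f f' (Ioi t) t) :
    f' ≤ slope f s t := by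
  apply le_of_tendsto <| (hasDerivWithinAt_iff_tendsto_slope' self_notMem_Ioi).mp hf'
  simp_rw [eventually_nhdsWithin_iff, slope_def_field]
  filter_upwards [eventually_lt_nhds htu] with w hwu (htw : t < w)
  exact hfc.slope_anti_adjacent hs (hfc.1.ordConnected.out hs hu ⟨(hst.trans htw).le, hwu.le⟩)
    hst htw

lemma le_add_mul_sub_of_hasDerivWithinAt_Ioi_s19 (hfc : ConcaveOn ℝ S f) (hs : s ∈ S) (ht : t ∈ S)
    (hS : (S ∩ Ioi t).Nonempty) (hf' : HasDerivWithinAt f f' (Ioi t) t) :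
    f s ≤ f t + f' * (s - t) := by
  rcases lt_trichotomy s t with hst | rfl | hts
  · obtain ⟨u, hu, htu⟩ := hS
    have hslope := hfc.le_slope_of_hasDerivWithinAt_Ioi_of_lt hs hu hst htu hf'
    rw [slope_def_field, le_div_iff₀ (sub_pos.2 hst)] at hslope
    linarith
  · simp
  · have hslope := hfc.slope_le_of_hasDerivWithinAt_Ioi ht hs hts hf'
    rw [slope_def_field, div_le_iff₀ (sub_pos.2 hts)] at hslope
    linarith

end ConcaveOn

/-- `v` is the diagonal of the scaling: `Aₖ = Diag(v) A` and `bᵏ = v ∘ b`. -/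
theorem subproblem_feasible_implies_feasible_general
    (m n : ℕ) (φ D : ℝ → ℝ)
    (a : Fin m → Fin n → ℝ) (b : Fin m → ℝ) (σ : ℝ)
    (xk : Fin n → ℝ) (v : Fin m → ℝ) (σk : ℝ)
    (hconc : ConcaveOn ℝ (Set.Ici 0) φ)
    (hderiv : ∀ t ∈ Set.Ici (0:ℝ), HasDerivWithinAt φ (D t) (Set.Ici t) t)
    (hDnonneg : ∀ t ∈ Set.Ici (0:ℝ), 0 ≤ D t)
    (hv : ∀ i, v i = Real.sqrt (D ((b i - ∑ j, a i j * xk j) ^ 2)))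
    (hσk : σk = σ + (∑ i, (v i * b i - v i * ∑ j, a i j * xk j) ^ 2)
        - ∑ i, φ ((b i - ∑ j, a i j * xk j) ^ 2)) :
    ∀ x : Fin n → ℝ,
      (∑ i, (v i * (∑ j, a i j * x j) - v i * b i) ^ 2) ≤ σk →
      ∑ i, φ ((b i - ∑ j, a i j * x j) ^ 2) ≤ σ := by
  intro x hx
  have hmaj (i : Fin m) : φ ((b i - ∑ j, a i j * x j) ^ 2) ≤ φ ((b i - ∑ j, a i j * xk j) ^ 2)
      + ((v i * (∑ j, a i j * x j) - v i * b i) ^ 2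
        - (v i * b i - v i * ∑ j, a i j * xk j) ^ 2) := by
    have ht : (b i - ∑ j, a i j * xk j) ^ 2 ∈ Ici (0 : ℝ) := mem_Ici.2 (sq_nonneg _)
    have hv_sq : v i ^ 2 = D ((b i - ∑ j, a i j * xk j) ^ 2) := by
      rw [hv i, Real.sq_sqrt (hDnonneg _ ht)]
    have htangent := hconc.le_add_mul_sub_of_hasDerivWithinAt_Ioi_s19
      (mem_Ici.2 (sq_nonneg (b i - ∑ j, a i j * x j))) ht
      ⟨_, mem_Ici.2 (le_trans ht (lt_add_one _).le), mem_Ioi.2 (lt_add_one _)⟩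
      ((hderiv _ ht).mono Ioi_subset_Ici_self)
    rw [← hv_sq] at htangent
    linear_combination htangent
  calc ∑ i, φ ((b i - ∑ j, a i j * x j) ^ 2)
      ≤ ∑ i, (φ ((b i - ∑ j, a i j * xk j) ^ 2)
          + ((v i * (∑ j, a i j * x j) - v i * b i) ^ 2
            - (v i * b i - v i * ∑ j, a i j * xk j) ^ 2)) := sum_le_sum fun i _ => hmaj i
    _ = ∑ i, φ ((b i - ∑ j, a i j * xk j) ^ 2) + ∑ i, (v i * (∑ j, a i j * x j) - v i * b i) ^ 2
          - ∑ i, (v i * b i - v i * ∑ j, a i j * xk j) ^ 2 := by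
      rw [sum_add_distrib, sum_sub_distrib, add_sub_assoc]
    _ ≤ σ := by linarith

/-- if `xk` is feasible for `∑ φ((bᵢ-aᵢᵀx)²) ≤ σ` and `x` is feasible for
the subproblem `‖Ak x - bk‖² ≤ σk` (with `Ak = Diag(v)A`, `bk = v ∘ b`,
`v i = √(φ'₊((bᵢ-aᵢᵀxk)²))` and `σk = σ + ‖bk - Ak xk‖² - ∑ φ((bᵢ-aᵢᵀxk)²)`), then `x`
is feasible for the original constraint. `D` is the right derivative of `φ`. -/
theorem subproblem_feasible_implies_feasible
    (m n : ℕ) (φ D : ℝ → ℝ)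
    (a : Fin m → Fin n → ℝ) (b : Fin m → ℝ) (σ : ℝ)
    (xk : Fin n → ℝ) (v : Fin m → ℝ) (σk : ℝ)
    (hcont : ContinuousOn φ (Set.Ici 0))
    (hconc : ConcaveOn ℝ (Set.Ici 0) φ)
    (h0 : φ 0 = 0)
    (hnonneg : ∀ t ∈ Set.Ici (0:ℝ), 0 ≤ φ t)
    (hderiv : ∀ t ∈ Set.Ici (0:ℝ), HasDerivWithinAt φ (D t) (Set.Ici t) t)
    (hDnonneg : ∀ t ∈ Set.Ici (0:ℝ), 0 ≤ D t)
    (hfeas : ∑ i, φ ((b i - ∑ j, a i j * xk j) ^ 2) ≤ σ)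
    (hv : ∀ i, v i = Real.sqrt (D ((b i - ∑ j, a i j * xk j) ^ 2)))
    (hσk : σk = σ + (∑ i, (v i * b i - v i * ∑ j, a i j * xk j) ^ 2)
        - ∑ i, φ ((b i - ∑ j, a i j * xk j) ^ 2)) :
    ∀ x : Fin n → ℝ,
      (∑ i, (v i * (∑ j, a i j * x j) - v i * b i) ^ 2) ≤ σk →
      ∑ i, φ ((b i - ∑ j, a i j * x j) ^ 2) ≤ σ :=
  subproblem_feasible_implies_feasible_general m n φ D a b σ xk v σk hconc hderiv hDnonneg hv hσk
end
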